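/- arXiv:1912.04933 — 2 statements merged into one kernel-verified Lean document; each statement's English description precedes it below -/
import Mathlib

section
/- Let (b_i(q))_{i=0,...,k} be a strongly q-log concave sequence of polynomials with nonnegative real coefficients, and define c_i(q) = b_0(q) + b_1(q) + ... + b_i(q) for 0 ≤ i ≤ k. Then (c_i(q))_{i=0,...,k} is a strongly q-log concave sequence. -/
/-!
Write `C n = b 0 + ⋯ + b (n - 1)`. Then `C (n+1) C (n+e) - C n C (n+e+1) = b n C (n+e) - C n b (n+e)`;
splitting `C (n+e)` at `e`, this is `∑_{s<e} b n b s` plus `∑_{x<n} (b n b (e+x) - b x b (n+e))`.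
The first sum has nonnegative coefficients, and so does every term of the second, since summing the
adjacent inequalities `b i b j ≥ b (i-1) b (j+1)` shows `b p b q ≥ b r b s` whenever
`r ≤ p, q ≤ s` and `p + q = r + s`. The partial sums increase coefficientwise, so they have
no internal zeroes.
-/

open Polynomial Finset

noncomputable section

/-- The number of inversions (the Coxeter length) of a permutation of `Fin n`. -/
def invNum {n : ℕ} (π : Equiv.Perm (Fin n)) : ℕ :=
  (Finset.univ.filter fun p : Fin n × Fin n => p.1 < p.2 ∧ π p.2 < π p.1).card

/-- The descent set of a permutation, as a set of positive integers (1-indexed positions):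
`i ∈ Des(π)` iff `1 ≤ i ≤ n-1` and `π_i > π_{i+1}` in one-line notation. -/
def DesSet {n : ℕ} (π : Equiv.Perm (Fin n)) : Finset ℕ :=
  (Finset.univ.filter fun a : Fin n => ∃ b : Fin n, (a : ℕ) + 1 = (b : ℕ) ∧ π b < π a).image
    fun a : Fin n => (a : ℕ) + 1

/-- The peak set of a permutation (1-indexed positions):
`i ∈ Peak(π)` iff `2 ≤ i ≤ n-1` and `π_{i-1} < π_i > π_{i+1}` in one-line notation. -/
def PeakSet {n : ℕ} (π : Equiv.Perm (Fin n)) : Finset ℕ :=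
  (Finset.univ.filter fun b : Fin n =>
      ∃ a c : Fin n, (a : ℕ) + 1 = (b : ℕ) ∧ (b : ℕ) + 1 = (c : ℕ) ∧ π a < π b ∧ π c < π b).image
    fun b : Fin n => (b : ℕ) + 1

/-- The q-integer `[j]_q = 1 + q + ⋯ + q^(j-1)`. -/
def qNum (j : ℕ) : Polynomial ℝ := ∑ i ∈ Finset.range j, X ^ i

/-- The q-factorial `[n]!_q = [1]_q [2]_q ⋯ [n]_q`. -/
def qFactorial : ℕ → Polynomial ℝ
  | 0 => 1
  | n + 1 => qFactorial n * qNum (n + 1)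

/-- The q-binomial coefficient `[n choose k]_q = [n]!_q / ([k]!_q [n-k]!_q)`.
(The divisor is monic and the division is exact, so `divByMonic` gives the true quotient.) -/
def qBinom (n k : ℕ) : Polynomial ℝ :=
  qFactorial n /ₘ (qFactorial k * qFactorial (n - k))

/-- `(−q;q)_k = (1+q)(1+q²)⋯(1+q^k)`. -/
def qPoch (k : ℕ) : Polynomial ℝ := ∏ i ∈ Finset.range k, (1 + X ^ (i + 1))

/-- `D_S(n,q) = Σ_{π ∈ 𝔖_n, Des(π) = S} q^{ℓ(π)}`. -/
def Dpoly (S : Finset ℕ) (n : ℕ) : Polynomial ℝ :=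
  ∑ π ∈ Finset.univ.filter (fun π : Equiv.Perm (Fin n) => DesSet π = S), X ^ invNum π

/-- `P_S(n,q) = Σ_{π ∈ 𝔖_n, Peak(π) = S} q^{ℓ(π)}`. -/
def Ppoly (S : Finset ℕ) (n : ℕ) : Polynomial ℝ :=
  ∑ π ∈ Finset.univ.filter (fun π : Equiv.Perm (Fin n) => PeakSet π = S), X ^ invNum π

/-- `Q_S(n,q) = Σ_{π ∈ 𝔖_n, Peak(π) ⊇ S} q^{ℓ(π)}`. -/
def Qpoly (S : Finset ℕ) (n : ℕ) : Polynomial ℝ :=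
  ∑ π ∈ Finset.univ.filter (fun π : Equiv.Perm (Fin n) => S ⊆ PeakSet π), X ^ invNum π

/-- The sequence `(a i)` for `lo ≤ i ≤ hi` is strongly q-log concave: it has no internal
zeroes and `a i * a j - a (i-1) * a (j+1)` has nonnegative coefficients for `lo < i ≤ j < hi`. -/
def StronglyQLogConcave (lo hi : ℕ) (a : ℕ → Polynomial ℝ) : Prop :=
  (∀ i j l : ℕ, lo ≤ i → i < j → j < l → l ≤ hi → a i ≠ 0 → a l ≠ 0 → a j ≠ 0) ∧
  ∀ i j : ℕ, lo < i → i ≤ j → j < hi → ∀ m : ℕ,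
    0 ≤ (a i * a j - a (i - 1) * a (j + 1)).coeff m

namespace Polynomial

variable (R : Type*) [Semiring R] [PartialOrder R] [IsOrderedRing R]

def nonnegCoeffs : Subsemiring R[X] where
  carrier := {p | ∀ m, 0 ≤ p.coeff m}
  zero_mem' m := by simp
  one_mem' m := by rw [coeff_one]; split_ifs <;> simp
  add_mem' hp hq m := by rw [coeff_add]; exact add_nonneg (hp m) (hq m)
  mul_mem' hp hq m := by
    rw [coeff_mul]; exact sum_nonneg fun x _ => mul_nonneg (hp x.1) (hq x.2)

variable {R}

theorem add_ne_zero_of_mem_nonnegCoeffs {p q : R[X]} (hp : p ∈ nonnegCoeffs R)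
    (hq : q ∈ nonnegCoeffs R) (h : p ≠ 0) : p + q ≠ 0 := by
  obtain ⟨m, hm⟩ : ∃ m, p.coeff m ≠ 0 := by simpa [Polynomial.ext_iff] using h
  intro hpq
  have hsum : p.coeff m + q.coeff m = 0 := by rw [← coeff_add, hpq, coeff_zero]
  exact hm ((add_eq_zero_iff_of_nonneg (hp m) (hq m)).mp hsum).1

end Polynomial

section LogConcave

variable {R : Type*} [CommRing R] {k : ℕ} {a : ℕ → R}

theorem mul_sub_mul_shift_mem (S : AddSubmonoid R)
    (ha : ∀ i j, 0 < i → i ≤ j → j < k → a i * a j - a (i - 1) * a (j + 1) ∈ S)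
    {x y d : ℕ} (hxy : x + d ≤ y) (hyk : y + d ≤ k) :
    a (x + d) * a y - a x * a (y + d) ∈ S := by
  induction d generalizing x with
  | zero => simp
  | succ d ih =>
    have htelescope : a (x + (d + 1)) * a y - a x * a (y + (d + 1)) =
        (a (x + 1 + d) * a y - a (x + 1) * a (y + d)) +
        (a (x + 1) * a (y + d) - a (x + 1 - 1) * a (y + d + 1)) := by
      rw [Nat.add_sub_cancel, show x + (d + 1) = x + 1 + d by omega,
        show y + (d + 1) = y + d + 1 by omega]
      ring
    rw [htelescope]
    exact S.add_mem (ih (by omega) (by omega)) (ha _ _ (by omega) (by omega) (by omega))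

theorem mul_sub_mul_mem_of_add_eq (S : AddSubmonoid R)
    (ha : ∀ i j, 0 < i → i ≤ j → j < k → a i * a j - a (i - 1) * a (j + 1) ∈ S)
    {p q r s : ℕ} (hrp : r ≤ p) (hrq : r ≤ q) (hsum : p + q = r + s) (hsk : s ≤ k) :
    a p * a q - a r * a s ∈ S := by
  rcases le_total p q with hpq | hqp
  · obtain ⟨d, rfl⟩ := Nat.exists_eq_add_of_le hrp
    obtain rfl : s = q + d := by omega
    exact mul_sub_mul_shift_mem S ha hpq hsk
  · obtain ⟨d, rfl⟩ := Nat.exists_eq_add_of_le hrq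
    obtain rfl : s = p + d := by omega
    rw [mul_comm]
    exact mul_sub_mul_shift_mem S ha hqp hsk

end LogConcave

theorem sum_range_succ_mul_sub_mul_sum_range_succ {R : Type*} [CommRing R] (b : ℕ → R)
    (n e : ℕ) :
    (∑ s ∈ range (n + 1), b s) * (∑ s ∈ range (n + e), b s) -
        (∑ s ∈ range n, b s) * (∑ s ∈ range (n + e + 1), b s) =
      ∑ s ∈ range e, b n * b s + ∑ x ∈ range n, (b n * b (e + x) - b x * b (n + e)) := by
  rw [sum_range_succ, sum_range_succ _ (n + e), add_comm n e, sum_range_add, sum_sub_distrib,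
    ← mul_sum, ← mul_sum, ← sum_mul]
  ring

theorem partialSums_mul_sub_mem {R : Type*} [CommRing R] (S : Subsemiring R) {k : ℕ}
    {b : ℕ → R} (hb_mem : ∀ i, b i ∈ S)
    (hb : ∀ i j, 0 < i → i ≤ j → j < k → b i * b j - b (i - 1) * b (j + 1) ∈ S)
    {i j : ℕ} (hi : 0 < i) (hij : i ≤ j) (hjk : j < k) :
    (∑ s ∈ range (i + 1), b s) * (∑ s ∈ range (j + 1), b s) -
      (∑ s ∈ range (i - 1 + 1), b s) * (∑ s ∈ range (j + 1 + 1), b s) ∈ S := by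
  obtain ⟨e, he⟩ := Nat.exists_eq_add_of_le (show i ≤ j + 1 by omega)
  rw [Nat.sub_add_cancel hi, he, sum_range_succ_mul_sub_mul_sum_range_succ]
  refine S.add_mem (S.sum_mem fun s _ => S.mul_mem (hb_mem i) (hb_mem s))
    (S.sum_mem fun x hx => ?_)
  rw [mem_range] at hx
  exact mul_sub_mul_mem_of_add_eq S.toAddSubmonoid hb (by omega) (by omega) (by omega)
    (by omega)

theorem StronglyQLogConcave.congr {lo hi : ℕ} {a b : ℕ → Polynomial ℝ}
    (ha : StronglyQLogConcave lo hi a) (hab : ∀ i ≤ hi, a i = b i) :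
    StronglyQLogConcave lo hi b := by
  obtain ⟨ha_zeroes, ha_ineq⟩ := ha
  refine ⟨fun i j l hi hij hjl hl hbi hbl => ?_, fun i j hi hij hj => ?_⟩
  · rw [← hab i (by omega), ← hab l hl, ← hab j (by omega)] at *
    exact ha_zeroes i j l hi hij hjl hl hbi hbl
  · rw [← hab i (by omega), ← hab j (by omega), ← hab (i - 1) (by omega),
      ← hab (j + 1) (by omega)]
    exact ha_ineq i j hi hij hj

theorem stronglyQLogConcave_partialSums {k : ℕ} {b : ℕ → Polynomial ℝ}
    (hb_nonneg : ∀ i, b i ∈ nonnegCoeffs ℝ) (hb : StronglyQLogConcave 0 k b) :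
    StronglyQLogConcave 0 k fun i => ∑ j ∈ range (i + 1), b j := by
  refine ⟨fun i j l _ hij _ _ hci _ => ?_,
    fun i j hi hij hjk => partialSums_mul_sub_mem _ hb_nonneg hb.2 hi hij hjk⟩
  beta_reduce at hci ⊢
  rw [← sum_range_add_sum_Ico _ (show i + 1 ≤ j + 1 by omega)]
  exact add_ne_zero_of_mem_nonnegCoeffs (Subsemiring.sum_mem _ fun s _ => hb_nonneg s)
    (Subsemiring.sum_mem _ fun s _ => hb_nonneg s) hci

/-- partial sums of a strongly q-log concave sequence of polynomials with
nonnegative real coefficients form a strongly q-log concave sequence. -/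
theorem stmt1 (k : ℕ) (b c : ℕ → Polynomial ℝ)
    (hb_nonneg : ∀ i, ∀ m : ℕ, 0 ≤ (b i).coeff m)
    (hb : StronglyQLogConcave 0 k b)
    (hc : ∀ i ≤ k, c i = ∑ j ∈ Finset.range (i + 1), b j) :
    StronglyQLogConcave 0 k c :=
  (stronglyQLogConcave_partialSums hb_nonneg hb).congr fun i hi => (hc i hi).symm

end
end

section
/- Let S ⊂ Z_{>0} be a nonempty finite set of positive integers with m = max(S). Then for all integers n ≥ m + 1, D_S(n,q) = Σ_{k=0}^{m} b_k(S;q) · [n−k choose m−k+1]_q, where b_0(S;q) = 0 and for k ≥ 1, b_k(S;q) = Σ q^{ℓ(π)}, the sum being over all π ∈ A(S; m+1) with π(m+1) = k. -/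
/-!
Deleting the last letter `v` of `π ∈ 𝔖_{n+1}` and standardizing the rest is a bijection onto
pairs `(v, σ)` with `σ ∈ 𝔖_n`; it keeps all descents before position `n` and removes exactly the
`n + 1 - v` inversions that end at the last position. When `n > max S` the position `n` is not a
descent, which forces the last letter of `σ` below `v`; so the generating functions `D_n(j)` of
`A(S; n)` by last letter satisfy `D_{n+1}(j) = q^{n+1-j} ∑_{i<j} D_n(i)`, with `D_{m+1}(k) = b_k`.
Summing, `∑_{i ≤ r} D_{m+1+t}(i) = ∑_k b_k q^{(m+1+t-r) t} [r-k choose t]_q` follows by induction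
on `t` and `r` from q-Pascal's rule, and `r = n` is the theorem.
-/

open Polynomial Finset

noncomputable section

lemma qNum_add (a b : ℕ) : qNum (a + b) = qNum a + X ^ a * qNum b := by
  simp only [qNum, Finset.sum_range_add, pow_add, Finset.mul_sum]

lemma qNum_succ_monic (j : ℕ) : (qNum (j + 1)).Monic := by
  rw [qNum, Finset.sum_range_succ, add_comm]
  refine monic_X_pow_add (lt_of_le_of_lt (degree_sum_le _ _) ?_)
  rw [Finset.sup_lt_iff (by exact_mod_cast WithBot.bot_lt_coe j)]
  intro i hi
  exact (degree_X_pow_le i).trans_lt (by exact_mod_cast Finset.mem_range.mp hi)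

lemma qFactorial_succ (n : ℕ) : qFactorial (n + 1) = qFactorial n * qNum (n + 1) := rfl

lemma qFactorial_monic (n : ℕ) : (qFactorial n).Monic := by
  induction n with
  | zero => exact monic_one
  | succ n ih => rw [qFactorial_succ]; exact ih.mul (qNum_succ_monic n)

/-- `[n choose k]_q` through q-Pascal's rule, avoiding the division in `qBinom`. -/
def gaussBinom : ℕ → ℕ → Polynomial ℝ
  | _, 0 => 1
  | 0, _ + 1 => 0
  | n + 1, k + 1 => gaussBinom n k + X ^ (k + 1) * gaussBinom n (k + 1)

@[simp] lemma gaussBinom_zero_right (n : ℕ) : gaussBinom n 0 = 1 := by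
  cases n <;> rfl

lemma gaussBinom_succ_succ (n k : ℕ) :
    gaussBinom (n + 1) (k + 1) = gaussBinom n k + X ^ (k + 1) * gaussBinom n (k + 1) := rfl

lemma gaussBinom_eq_zero_of_lt : ∀ {n k : ℕ}, n < k → gaussBinom n k = 0
  | 0, _ + 1, _ => rfl
  | n + 1, k + 1, h => by
    rw [gaussBinom_succ_succ, gaussBinom_eq_zero_of_lt (by omega),
      gaussBinom_eq_zero_of_lt (by omega), mul_zero, add_zero]

lemma gaussBinom_mul_qFactorial (a b : ℕ) :
    gaussBinom (a + b) b * (qFactorial a * qFactorial b) = qFactorial (a + b) := by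
  induction b generalizing a with
  | zero => simp [qFactorial]
  | succ b ihb =>
    induction a with
    | zero =>
      have h := ihb 0
      rw [zero_add] at h ⊢
      rw [gaussBinom_succ_succ, gaussBinom_eq_zero_of_lt (Nat.lt_succ_self b), qFactorial_succ]
      linear_combination qNum (b + 1) * h
    | succ a iha =>
      have h₁ := ihb (a + 1)
      rw [show a + 1 + b = a + b + 1 by ring, qFactorial_succ a] at h₁
      rw [show a + (b + 1) = a + b + 1 by ring, qFactorial_succ b] at iha
      rw [show a + 1 + (b + 1) = a + b + 1 + 1 by ring, gaussBinom_succ_succ,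
        qFactorial_succ (a + b + 1), qFactorial_succ a, qFactorial_succ b,
        show a + b + 1 + 1 = (b + 1) + (a + 1) by ring, qNum_add (b + 1) (a + 1)]
      linear_combination qNum (b + 1) * h₁ + X ^ (b + 1) * qNum (a + 1) * iha

lemma qBinom_add_left (a b : ℕ) : qBinom (a + b) a = gaussBinom (a + b) b := by
  rw [qBinom, Nat.add_sub_cancel_left, ← gaussBinom_mul_qFactorial a b,
    mul_comm, mul_divByMonic_cancel_left _ ((qFactorial_monic a).mul (qFactorial_monic b))]

open Equiv

def insertLast {n : ℕ} (v : Fin (n + 1)) (σ : Perm (Fin n)) : Perm (Fin (n + 1)) :=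
  (finSuccEquiv' (Fin.last n)).trans ((optionCongr σ).trans (finSuccEquiv' v).symm)

lemma invNum_eq_sum {n : ℕ} (π : Perm (Fin n)) :
    invNum π = ∑ a, ∑ b, if a < b ∧ π b < π a then 1 else 0 := by
  rw [invNum, Finset.card_filter, Fintype.sum_prod_type]

section insertLast

variable {n : ℕ}

@[simp] lemma insertLast_last (v : Fin (n + 1)) (σ : Perm (Fin n)) :
    insertLast v σ (Fin.last n) = v := by
  simp [insertLast, finSuccEquiv'_at]

@[simp] lemma insertLast_castSucc (v : Fin (n + 1)) (σ : Perm (Fin n)) (i : Fin n) :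
    insertLast v σ i.castSucc = v.succAbove (σ i) := by
  simp [insertLast, finSuccEquiv'_last_apply_castSucc]

lemma insertLast_bijective :
    Function.Bijective fun p : Fin (n + 1) × Perm (Fin n) => insertLast p.1 p.2 := by
  refine (Fintype.bijective_iff_injective_and_card _).mpr ⟨?_, ?_⟩
  · rintro ⟨v, σ⟩ ⟨w, τ⟩ h
    have hvw : v = w := by simpa using congrArg (· (Fin.last n)) h
    subst hvw
    refine Prod.ext rfl (Equiv.ext fun i => ?_)
    simpa using congrArg (· i.castSucc) h
  · simp [Fintype.card_perm, Nat.factorial_succ]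

/-- The inversions `(a, last)` correspond to the values above `π (last n)`. -/
lemma invNum_eq_sum_castSucc_add (π : Perm (Fin (n + 1))) :
    invNum π = (∑ a : Fin n, ∑ b : Fin n,
      if a < b ∧ π b.castSucc < π a.castSucc then 1 else 0) + (n - π (Fin.last n)) := by
  have hlast : ∑ a : Fin n, (if π (Fin.last n) < π a.castSucc then 1 else 0) =
      n - π (Fin.last n) := by
    calc ∑ a : Fin n, (if π (Fin.last n) < π a.castSucc then 1 else 0)
        = ∑ x, if π (Fin.last n) < π x then 1 else 0 := by
          rw [Fin.sum_univ_castSucc, if_neg (lt_irrefl _), add_zero]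
      _ = ∑ x, if π (Fin.last n) < x then 1 else 0 :=
          Equiv.sum_comp π fun x => if π (Fin.last n) < x then 1 else 0
      _ = n - π (Fin.last n) := by simp [Finset.sum_boole, Finset.filter_lt_eq_Ioi]
  rw [invNum_eq_sum]
  simp only [Fin.sum_univ_castSucc, Fin.castSucc_lt_castSucc_iff, Fin.castSucc_lt_last,
    true_and, not_lt.mpr (Fin.le_last _), false_and, if_false, Finset.sum_const_zero, add_zero,
    Finset.sum_add_distrib, hlast]

lemma invNum_insertLast (v : Fin (n + 1)) (σ : Perm (Fin n)) :
    invNum (insertLast v σ) = invNum σ + (n - v) := by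
  simp only [invNum_eq_sum_castSucc_add, insertLast_castSucc, insertLast_last,
    Fin.succAbove_lt_succAbove_iff, invNum_eq_sum]

lemma mem_DesSet_iff (π : Perm (Fin (n + 1))) (l : ℕ) :
    l ∈ DesSet π ↔ ∃ i : Fin n, (i : ℕ) + 1 = l ∧ π i.succ < π i.castSucc := by
  simp only [DesSet, Finset.mem_image, Finset.mem_filter, Finset.mem_univ, true_and]
  constructor
  · rintro ⟨a, ⟨b, hab, hlt⟩, rfl⟩
    have ha : a ≠ Fin.last n := fun h => by have := b.isLt; simp [h] at hab; omega
    have hb : (a.castPred ha).succ = b := Fin.ext (by simpa using hab)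
    exact ⟨a.castPred ha, rfl, by rwa [hb, Fin.castSucc_castPred]⟩
  · rintro ⟨i, rfl, h⟩
    exact ⟨i.castSucc, ⟨i.succ, rfl, h⟩, rfl⟩

lemma mem_DesSet_insertLast (v : Fin (n + 2)) (σ : Perm (Fin (n + 1))) (l : ℕ) :
    l ∈ DesSet (insertLast v σ) ↔
      l ∈ DesSet σ ∨ (l = n + 1 ∧ v ≤ (σ (Fin.last n)).castSucc) := by
  rw [mem_DesSet_iff, mem_DesSet_iff, Fin.exists_fin_succ']
  simp [-Fin.castSucc_succ, Fin.succ_castSucc, Fin.succAbove_lt_succAbove_iff,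
    Fin.lt_succAbove_iff_le_castSucc, eq_comm]

lemma DesSet_insertLast_eq_iff {S : Finset ℕ} (hS : n + 1 ∉ S) (v : Fin (n + 2))
    (σ : Perm (Fin (n + 1))) :
    DesSet (insertLast v σ) = S ↔ DesSet σ = S ∧ (σ (Fin.last n)).castSucc < v := by
  have hσ : n + 1 ∉ DesSet σ := by
    rw [mem_DesSet_iff]
    rintro ⟨i, hi, -⟩
    omega
  constructor
  · intro h
    have hlt : (σ (Fin.last n)).castSucc < v := by
      by_contra! hle
      exact hS (h ▸ (mem_DesSet_insertLast v σ (n + 1)).mpr (Or.inr ⟨rfl, hle⟩))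
    refine ⟨Finset.ext fun l => ?_, hlt⟩
    rw [← h, mem_DesSet_insertLast]
    simp [not_le.mpr hlt]
  · rintro ⟨rfl, hlt⟩
    ext l
    rw [mem_DesSet_insertLast]
    simp [not_le.mpr hlt]

end insertLast

/-- The last letter is counted from `1`, as `k` in `π(m+1) = k`; so `DpolyLast S n 0 = 0`. -/
def DpolyLast (S : Finset ℕ) (n j : ℕ) : Polynomial ℝ :=
  ∑ π ∈ Finset.univ.filter (fun π : Perm (Fin (n + 1)) =>
      DesSet π = S ∧ (π (Fin.last n) : ℕ) + 1 = j), X ^ invNum π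

section DpolyLast

variable {S : Finset ℕ} {n : ℕ}

@[simp] lemma DpolyLast_zero : DpolyLast S n 0 = 0 := by
  simp [DpolyLast]

lemma DpolyLast_eq_zero_of_lt (hn : n ∈ S) {j : ℕ} (hj : n < j) : DpolyLast S n j = 0 := by
  refine Finset.sum_eq_zero fun π hπ => ?_
  simp only [Finset.mem_filter, Finset.mem_univ, true_and] at hπ
  obtain ⟨hDes, hlast⟩ := hπ
  have hmax : π (Fin.last n) = Fin.last n :=
    Fin.ext (by have := (π (Fin.last n)).isLt; simp; omega)
  obtain ⟨i, hi, hdesc⟩ := (mem_DesSet_iff π n).mp (hDes ▸ hn)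
  have hi_last : i.succ = Fin.last n := Fin.ext (by simpa using hi)
  rw [hi_last, hmax] at hdesc
  exact absurd (Fin.le_last _) (not_le.mpr hdesc)

lemma sum_range_DpolyLast (r : ℕ) :
    ∑ i ∈ Finset.range r, DpolyLast S n i =
      ∑ π ∈ Finset.univ.filter (fun π : Perm (Fin (n + 1)) =>
        DesSet π = S ∧ (π (Fin.last n) : ℕ) + 1 < r), X ^ invNum π := by
  rw [← Finset.sum_fiberwise_of_maps_to (t := Finset.range r)
    (g := fun π : Perm (Fin (n + 1)) => (π (Fin.last n) : ℕ) + 1)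
    (fun π hπ => by simpa using (Finset.mem_filter.mp hπ).2.2)]
  refine Finset.sum_congr rfl fun i hi => ?_
  rw [DpolyLast, Finset.filter_filter]
  refine Finset.sum_congr (Finset.filter_congr fun π _ => ?_) fun _ _ => rfl
  have := Finset.mem_range.mp hi
  constructor
  · rintro ⟨hDes, rfl⟩; exact ⟨⟨hDes, this⟩, rfl⟩
  · rintro ⟨⟨hDes, -⟩, rfl⟩; exact ⟨hDes, rfl⟩

lemma Dpoly_succ : Dpoly S (n + 1) = ∑ i ∈ Finset.range (n + 2), DpolyLast S n i := by
  rw [sum_range_DpolyLast, Dpoly]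
  refine Finset.sum_congr (Finset.filter_congr fun π _ => ?_) fun _ _ => rfl
  have := (π (Fin.last n)).isLt
  constructor
  · intro h; exact ⟨h, by omega⟩
  · exact And.left

lemma DpolyLast_succ (hS : ∀ s ∈ S, s ≤ n) {j : ℕ} (hj : j ≤ n + 2) :
    DpolyLast S (n + 1) j = X ^ (n + 2 - j) * ∑ i ∈ Finset.range j, DpolyLast S n i := by
  obtain _ | w := j
  · simp
  set v : Fin (n + 2) := ⟨w, by omega⟩
  have hSn : n + 1 ∉ S := fun h => by have := hS _ h; omega
  have hv : ∀ σ : Perm (Fin (n + 1)),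
      (σ (Fin.last n)).castSucc < v ↔ (σ (Fin.last n) : ℕ) + 1 < w + 1 := fun σ => by
    rw [Fin.lt_def, Fin.val_castSucc]; simp [v]
  rw [sum_range_DpolyLast, Finset.mul_sum, DpolyLast]
  symm
  refine Finset.sum_bij (fun σ _ => insertLast v σ) ?_ ?_ ?_ ?_
  · intro σ hσ
    simp only [Finset.mem_filter, Finset.mem_univ, true_and, ← hv] at hσ ⊢
    exact ⟨(DesSet_insertLast_eq_iff hSn v σ).mpr hσ, by simp [v]⟩
  · intro σ _ τ _ h
    exact congrArg Prod.snd (insertLast_bijective.1 (a₁ := (v, σ)) (a₂ := (v, τ)) h)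
  · intro π hπ
    obtain ⟨⟨v', σ⟩, rfl⟩ := insertLast_bijective.2 π
    simp only [Finset.mem_filter, Finset.mem_univ, true_and, insertLast_last,
      DesSet_insertLast_eq_iff hSn] at hπ
    obtain rfl : v' = v := Fin.ext (by simp [v]; omega)
    refine ⟨σ, ?_, rfl⟩
    simpa [← hv] using hπ.1
  · intro σ _
    rw [invNum_insertLast, pow_add, mul_comm]
    congr 2
    simp [v]

end DpolyLast

lemma sum_range_DpolyLast_add {S : Finset ℕ} {m : ℕ} (hS : ∀ s ∈ S, s ≤ m) (t : ℕ) {r : ℕ}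
    (hr : r ≤ m + t + 1) :
    ∑ i ∈ Finset.range (r + 1), DpolyLast S (m + t) i =
      ∑ k ∈ Finset.range (r + 1),
        DpolyLast S m k * (X ^ ((m + t + 1 - r) * t) * gaussBinom (r - k) t) := by
  induction t generalizing r with
  | zero => simp
  | succ t iht =>
    induction r with
    | zero => simp
    | succ r ihr =>
      obtain ⟨e, he⟩ : ∃ e, m + t + 1 = r + e := ⟨m + t + 1 - r, by omega⟩
      rw [Finset.sum_range_succ, ihr (by omega), ← add_assoc,
        DpolyLast_succ (fun s hs => (hS s hs).trans (by omega)) (by omega), iht (by omega),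
        Finset.sum_range_succ _ (r + 1), Nat.sub_self,
        gaussBinom_eq_zero_of_lt (Nat.succ_pos t), mul_zero, mul_zero, add_zero,
        Finset.mul_sum, ← Finset.sum_add_distrib]
      refine Finset.sum_congr rfl fun k hk => ?_
      have hk := Finset.mem_range.mp hk
      rw [show r + 1 - k = r - k + 1 by omega, gaussBinom_succ_succ,
        show m + t + 1 + 1 - (r + 1) = e by omega, show m + t + 1 + 1 - r = e + 1 by omega,
        show m + t + 1 - r = e by omega]
      ring

theorem stmt3_general (S : Finset ℕ) (hS : S.Nonempty)
    (m : ℕ) (hm : m = S.max' hS)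
    (b : ℕ → Polynomial ℝ) (hb0 : b 0 = 0)
    (hb : ∀ j, 1 ≤ j → j ≤ m →
      b j = ∑ π ∈ Finset.univ.filter (fun π : Equiv.Perm (Fin (m + 1)) =>
          DesSet π = S ∧ (π (Fin.last m) : ℕ) + 1 = j),
        X ^ invNum π)
    (n : ℕ) (hn : m + 1 ≤ n) :
    Dpoly S n = ∑ k ∈ Finset.range (m + 1), b k * qBinom (n - k) (m - k + 1) := by
  have hmS : m ∈ S := hm ▸ S.max'_mem hS
  have hSm : ∀ s ∈ S, s ≤ m := fun s hs => hm ▸ S.le_max' s hs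
  have hb' : ∀ k ≤ m, b k = DpolyLast S m k := fun k hk => by
    obtain rfl | hk0 := Nat.eq_zero_or_pos k
    exacts [hb0.trans DpolyLast_zero.symm, hb k hk0 hk]
  obtain ⟨t, rfl⟩ : ∃ t, n = m + t + 1 := ⟨n - m - 1, by omega⟩
  calc Dpoly S (m + t + 1)
      = ∑ k ∈ Finset.range (m + t + 2), DpolyLast S m k * gaussBinom (m + t + 1 - k) t := by
        rw [Dpoly_succ, sum_range_DpolyLast_add hSm t le_rfl]
        simp
    _ = ∑ k ∈ Finset.range (m + 1), DpolyLast S m k * gaussBinom (m + t + 1 - k) t :=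
        (Finset.sum_subset (Finset.range_subset_range.mpr (by omega)) fun k _ hk => by
          rw [DpolyLast_eq_zero_of_lt hmS (by simpa using hk), zero_mul]).symm
    _ = _ := Finset.sum_congr rfl fun k hk => by
        have hk : k ≤ m := Nat.lt_succ_iff.mp (Finset.mem_range.mp hk)
        rw [hb' k hk, show m + t + 1 - k = m - k + 1 + t by omega, qBinom_add_left]

/-- the q-descent polynomial in the basis of q-binomial coefficients
`[n-k choose m-k+1]_q`:  `D_S(n,q) = Σ_{k=0}^m b_k(S;q) [n-k choose m-k+1]_q`. -/
theorem stmt3 (S : Finset ℕ) (hS : S.Nonempty) (hpos : ∀ s ∈ S, 0 < s)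
    (m : ℕ) (hm : m = S.max' hS)
    (b : ℕ → Polynomial ℝ) (hb0 : b 0 = 0)
    (hb : ∀ j, 1 ≤ j → j ≤ m →
      b j = ∑ π ∈ Finset.univ.filter (fun π : Equiv.Perm (Fin (m + 1)) =>
          DesSet π = S ∧ (π (Fin.last m) : ℕ) + 1 = j),
        X ^ invNum π)
    (n : ℕ) (hn : m + 1 ≤ n) :
    Dpoly S n = ∑ k ∈ Finset.range (m + 1), b k * qBinom (n - k) (m - k + 1) :=
  stmt3_general S hS m hm b hb0 hb n hn

end
end
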